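/- arXiv:1802.08843 — 5 statements merged into one kernel-verified Lean document; each statement's English description precedes it below -/
import Mathlib

section
/- Let k and r be integers with k ≥ 2 and r ≥ 2, let t = t(k,r), and let H be a k-edge-maximal r-uniform hypergraph on n vertices with n ≥ t. Then the number of edges of H satisfies |E(H)| ≤ C(t,r) + (n−t)·k, where C(a,b) denotes the binomial coefficient (taken to be 0 when b > a). -/
/-- A (finite) hypergraph: a finite vertex set together with a finite set of edges,
    each edge being a finite set of vertices. -/
structure FinHypergraph (α : Type*) where
  verts : Finset α
  edges : Finset (Finset α)

namespace FinHypergraph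

variable {α : Type*} [DecidableEq α]

/-- `H.cut X` is the set of edges of `H` intersecting both `X` and `V(H) \ X`. -/
def cut (H : FinHypergraph α) (X : Finset α) : Finset (Finset α) :=
  H.edges.filter fun e => (e ∩ X).Nonempty ∧ (e ∩ (H.verts \ X)).Nonempty

/-- The edge-connectivity `κ'(H)`: the minimum of `|H.cut X|` over nonempty proper
    subsets `X` of the vertex set. -/
noncomputable def edgeConn (H : FinHypergraph α) : ℕ :=
  sInf {d : ℕ | ∃ X : Finset α, X ⊆ H.verts ∧ X.Nonempty ∧ X ≠ H.verts ∧ d = (H.cut X).card}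

/-- `H'` is a subhypergraph of `H`. -/
def IsSub (H' H : FinHypergraph α) : Prop :=
  H'.verts ⊆ H.verts ∧ H'.edges ⊆ H.edges

/-- The strength `κ̄'(H)`: the maximum edge-connectivity over all subhypergraphs of `H`. -/
noncomputable def strength (H : FinHypergraph α) : ℕ :=
  sSup {d : ℕ | ∃ H' : FinHypergraph α, H'.IsSub H ∧ d = H'.edgeConn}

/-- `H` is `r`-uniform (with all edges inside the vertex set). -/
def IsUniform (H : FinHypergraph α) (r : ℕ) : Prop :=
  ∀ e ∈ H.edges, e ⊆ H.verts ∧ e.card = r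

/-- `H + e`: add a new edge. -/
def addEdge (H : FinHypergraph α) (e : Finset α) : FinHypergraph α :=
  ⟨H.verts, insert e H.edges⟩

/-- `H - X`: delete a set of edges. -/
def deleteEdges (H : FinHypergraph α) (X : Finset (Finset α)) : FinHypergraph α :=
  ⟨H.verts, H.edges \ X⟩

/-- The subhypergraph induced by a vertex subset `S`. -/
def induce (H : FinHypergraph α) (S : Finset α) : FinHypergraph α :=
  ⟨S, H.edges.filter fun e => e ⊆ S⟩

/-- `H` is a `k`-edge-maximal `r`-uniform hypergraph: `κ̄'(H) ≤ k`, but adding any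
    missing `r`-subset of the vertex set as an edge raises the strength above `k`. -/
def IsEdgeMaximal (H : FinHypergraph α) (k r : ℕ) : Prop :=
  H.IsUniform r ∧ H.strength ≤ k ∧
    ∀ e : Finset α, e ⊆ H.verts → e.card = r → e ∉ H.edges →
      k + 1 ≤ (H.addEdge e).strength

/-- The degree of a vertex: the number of edges containing it. -/
def degree (H : FinHypergraph α) (v : α) : ℕ :=
  (H.edges.filter fun e => v ∈ e).card

/-- The minimum degree `δ(H)`. -/
noncomputable def minDegree (H : FinHypergraph α) : ℕ :=
  sInf {d : ℕ | ∃ v ∈ H.verts, d = H.degree v}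

/-- `X` is a minimum edge-cut of `H`: it is an edge-cut and has cardinality `κ'(H)`. -/
def IsMinEdgeCut (H : FinHypergraph α) (X : Finset (Finset α)) : Prop :=
  (∃ Y : Finset α, Y ⊆ H.verts ∧ Y.Nonempty ∧ Y ≠ H.verts ∧ X = H.cut Y) ∧
    X.card = H.edgeConn

/-- The family `M(n; k, r)` (with `t = t(k,r)` given as a parameter): start from a complete
    `r`-uniform hypergraph on `t` vertices and repeatedly add a new vertex together with `k`
    new `r`-element edges through it whose remaining vertices are old vertices. -/
inductive MFamily (k r t : ℕ) : FinHypergraph α → Prop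
  | base (V : Finset α) (hV : V.card = t) :
      MFamily k r t ⟨V, V.powersetCard r⟩
  | step (H : FinHypergraph α) (v : α) (E : Finset (Finset α)) :
      MFamily k r t H → v ∉ H.verts → E.card = k →
      (∀ e ∈ E, v ∈ e ∧ e ⊆ insert v H.verts ∧ e.card = r) →
      MFamily k r t ⟨insert v H.verts, H.edges ∪ E⟩

end FinHypergraph


/-!
Let `f(m) = C(min(m, t), r) + (m - t)·k`. Every vertex set `S` of size `m` spans at most `f(m)`
edges. For `m ≤ t` these edges are `r`-subsets of `S`. For `m > t` the subhypergraph induced by `S`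
has edge-connectivity at most `κ̄'(H) ≤ k`, so `S` splits into nonempty parts of sizes `a + b = m`
joined by at most `k` edges, and `f(a) + f(b) + k ≤ f(a + b)`: beyond `t` the function `f` grows by
exactly `k` per step and below `t` by `C(m, r-1) ≤ C(t-1, r-1) ≤ k`, which reduces the inequality
to `b = 1`, where `f(1) = 0`, or to `a + b = t + 1`, where it reads `C(a, r) + C(b, r) ≤ C(a + b - 1, r)`.
-/

open Finset

theorem Nat.choose_succ_add_choose_succ_le {r : ℕ} (hr : 2 ≤ r) (a b : ℕ) :
    (a + 1).choose r + (b + 1).choose r ≤ (a + b + 1).choose r := by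
  obtain ⟨r, rfl⟩ : ∃ r', r = r' + 1 := ⟨r - 1, by omega⟩
  induction a with
  | zero => simp [Nat.choose_eq_zero_of_lt (show 1 < r + 1 by omega)]
  | succ a ih =>
    have hmono : (a + 1).choose r ≤ (a + b + 1).choose r := Nat.choose_le_choose _ (by omega)
    rw [show a + 1 + b + 1 = (a + b + 1) + 1 by omega, Nat.choose_succ_succ' (a + b + 1),
      Nat.choose_succ_succ' (a + 1)]
    omega

def edgeBound (k r t m : ℕ) : ℕ :=
  (min m t).choose r + (m - t) * k

section edgeBound

variable {k r t : ℕ}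

theorem edgeBound_of_le {m : ℕ} (h : m ≤ t) : edgeBound k r t m = m.choose r := by
  simp [edgeBound, min_eq_left h, Nat.sub_eq_zero_of_le h]

theorem edgeBound_of_ge {m : ℕ} (h : t ≤ m) : edgeBound k r t m = t.choose r + (m - t) * k := by
  simp [edgeBound, min_eq_right h]

theorem edgeBound_succ_of_ge {m : ℕ} (h : t ≤ m) :
    edgeBound k r t (m + 1) = edgeBound k r t m + k := by
  rw [edgeBound_of_ge h, edgeBound_of_ge (by omega), Nat.sub_add_comm h, Nat.succ_mul]
  ring

theorem edgeBound_succ_le (hk : (t - 1).choose (r - 1) ≤ k) (m : ℕ) :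
    edgeBound k r t (m + 1) ≤ edgeBound k r t m + k := by
  rcases le_or_gt t m with htm | hmt
  · exact (edgeBound_succ_of_ge htm).le
  rw [edgeBound_of_le hmt, edgeBound_of_le hmt.le]
  cases r with
  | zero => simp
  | succ r =>
    have : m.choose r ≤ (t - 1).choose r := Nat.choose_le_choose _ (by omega)
    rw [Nat.choose_succ_succ']
    simp only [Nat.add_sub_cancel] at hk
    omega

theorem edgeBound_one (hr : 2 ≤ r) (ht : 1 ≤ t) : edgeBound k r t 1 = 0 := by
  rw [edgeBound_of_le ht, Nat.choose_eq_zero_of_lt (by omega)]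

theorem edgeBound_add_add_le (hr : 2 ≤ r) (ht : 1 ≤ t) (hk : (t - 1).choose (r - 1) ≤ k)
    {a b : ℕ} (ha : 1 ≤ a) (hb : 1 ≤ b) (hab : t < a + b) :
    edgeBound k r t a + edgeBound k r t b + k ≤ edgeBound k r t (a + b) := by
  obtain ⟨b, rfl⟩ : ∃ b', b = b' + 1 := ⟨b - 1, by omega⟩
  clear hb
  induction b with
  | zero =>
    rw [edgeBound_one hr ht, add_zero, edgeBound_succ_of_ge (by omega)]
  | succ b ih =>
    rcases eq_or_lt_of_le (show t ≤ a + (b + 1) by omega) with hsplit | hlarge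
    · obtain ⟨a, rfl⟩ : ∃ a', a = a' + 1 := ⟨a - 1, by omega⟩
      have hsum := Nat.choose_succ_add_choose_succ_le hr a (b + 1)
      rw [edgeBound_of_le (show a + 1 ≤ t by omega), edgeBound_of_le (show b + 1 + 1 ≤ t by omega),
        ← add_assoc, edgeBound_succ_of_ge hsplit.le, edgeBound_of_le hsplit.ge,
        show a + 1 + (b + 1) = a + (b + 1) + 1 by omega]
      omega
    · have hstep := edgeBound_succ_le hk (b + 1)
      have hgrow : edgeBound k r t (a + (b + 1) + 1) = edgeBound k r t (a + (b + 1)) + k :=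
        edgeBound_succ_of_ge hlarge.le
      rw [← add_assoc]
      linarith [ih hlarge]

end edgeBound

namespace FinHypergraph

variable {α : Type*} [DecidableEq α] {k r : ℕ} {H : FinHypergraph α}

theorem induce_verts (h : ∀ e ∈ H.edges, e ⊆ H.verts) : H.induce H.verts = H := by
  cases H
  simp only [induce, mk.injEq, true_and]
  exact filter_true_of_mem h

theorem card_induce_edges_le_choose (hU : H.IsUniform r) (S : Finset α) :
    (H.induce S).edges.card ≤ S.card.choose r := by
  rw [← card_powersetCard]
  refine card_le_card fun e he => ?_
  rw [induce, mem_filter] at he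
  exact mem_powersetCard.mpr ⟨he.2, (hU e he.1).2⟩

theorem card_induce_edges_le_add (S X : Finset α) :
    (H.induce S).edges.card ≤
      (H.induce X).edges.card + (H.induce (S \ X)).edges.card + ((H.induce S).cut X).card := by
  have hcover : (H.induce S).edges ⊆
      ((H.induce X).edges ∪ (H.induce (S \ X)).edges) ∪ (H.induce S).cut X := by
    intro e he
    obtain ⟨heH, heS⟩ := mem_filter.mp he
    rw [mem_union, mem_union]
    by_cases hX : e ⊆ X
    · exact Or.inl (Or.inl (mem_filter.mpr ⟨heH, hX⟩))
    by_cases hSX : e ⊆ S \ X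
    · exact Or.inl (Or.inr (mem_filter.mpr ⟨heH, hSX⟩))
    obtain ⟨u, hu, huX⟩ := not_subset.mp hX
    obtain ⟨v, hv, hvSX⟩ := not_subset.mp hSX
    have hvX : v ∈ X := by simpa [heS hv] using hvSX
    exact Or.inr (mem_filter.mpr ⟨he, ⟨v, mem_inter.mpr ⟨hv, hvX⟩⟩,
      ⟨u, mem_inter.mpr ⟨hu, mem_sdiff.mpr ⟨heS hu, huX⟩⟩⟩⟩)
  calc (H.induce S).edges.card ≤ _ := card_le_card hcover
    _ ≤ _ := card_union_le _ _
    _ ≤ _ := Nat.add_le_add_right (card_union_le _ _) _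

theorem edgeConn_le_card_edges (H : FinHypergraph α) : H.edgeConn ≤ H.edges.card := by
  unfold edgeConn
  rcases Set.eq_empty_or_nonempty
      {d | ∃ X, X ⊆ H.verts ∧ X.Nonempty ∧ X ≠ H.verts ∧ d = (H.cut X).card} with hD | ⟨d, X, hX⟩
  · simp [hD]
  · exact le_trans (Nat.sInf_le ⟨X, hX⟩) (hX.2.2.2 ▸ card_le_card (filter_subset _ _))

theorem edgeConn_le_strength {H' : FinHypergraph α} (h : H'.IsSub H) :
    H'.edgeConn ≤ H.strength := by
  refine le_csSup ⟨H.edges.card, ?_⟩ ⟨H', h, rfl⟩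
  rintro d ⟨H'', h'', rfl⟩
  exact (edgeConn_le_card_edges H'').trans (card_le_card h''.2)

theorem exists_cut_card_eq_edgeConn (h : 1 < H.verts.card) :
    ∃ X ⊆ H.verts, X.Nonempty ∧ X ≠ H.verts ∧ (H.cut X).card = H.edgeConn := by
  obtain ⟨x, hx⟩ := card_pos.mp (by omega : 0 < H.verts.card)
  have hD : {d | ∃ X, X ⊆ H.verts ∧ X.Nonempty ∧ X ≠ H.verts ∧ d = (H.cut X).card}.Nonempty := by
    refine ⟨_, {x}, singleton_subset_iff.mpr hx, singleton_nonempty x, ?_, rfl⟩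
    rintro hxV
    simp [← hxV] at h
  obtain ⟨X, hXV, hXne, hXV', hX⟩ := Nat.sInf_mem hD
  exact ⟨X, hXV, hXne, hXV', hX.symm⟩

theorem exists_ssubset_cut_card_le (hs : H.strength ≤ k) {S : Finset α} (hS : S ⊆ H.verts)
    (h : 1 < S.card) : ∃ X ⊂ S, X.Nonempty ∧ ((H.induce S).cut X).card ≤ k := by
  obtain ⟨X, hXS, hXne, hXS', hX⟩ := exists_cut_card_eq_edgeConn (H := H.induce S) h
  refine ⟨X, hXS.ssubset_of_ne hXS', hXne, ?_⟩
  rw [hX]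
  exact (edgeConn_le_strength ⟨hS, filter_subset _ _⟩).trans hs

theorem card_induce_edges_le_edgeBound {t : ℕ} (hr : 2 ≤ r) (ht : 1 ≤ t)
    (hk : (t - 1).choose (r - 1) ≤ k) (hU : H.IsUniform r) (hs : H.strength ≤ k)
    {S : Finset α} (hS : S ⊆ H.verts) :
    (H.induce S).edges.card ≤ edgeBound k r t S.card := by
  induction S using Finset.strongInduction with
  | _ S ih =>
    rcases le_or_gt S.card t with hSt | htS
    · rw [edgeBound_of_le hSt]
      exact card_induce_edges_le_choose hU S
    obtain ⟨X, hXS, hXne, hcut⟩ := exists_ssubset_cut_card_le hs hS (by omega)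
    have hSX : S \ X ⊂ S := sdiff_ssubset hXS.subset hXne
    have hcard : (S \ X).card + X.card = S.card := card_sdiff_add_card_eq_card hXS.subset
    have hSXne : (S \ X).Nonempty := sdiff_nonempty.mpr hXS.not_subset
    calc (H.induce S).edges.card
        ≤ edgeBound k r t X.card + edgeBound k r t (S \ X).card + k :=
          (card_induce_edges_le_add S X).trans <| add_le_add (add_le_add
            (ih X hXS (hXS.subset.trans hS)) (ih _ hSX (hSX.subset.trans hS))) hcut
      _ ≤ edgeBound k r t (X.card + (S \ X).card) :=
          edgeBound_add_add_le hr ht hk (card_pos.mpr hXne) (card_pos.mpr hSXne) (by omega)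
      _ = edgeBound k r t S.card := by rw [← hcard, add_comm]

end FinHypergraph

open FinHypergraph in
theorem edge_maximal_upper_bound_general {α : Type*} [DecidableEq α] (k r t n : ℕ)
    (hr : 2 ≤ r)
    (ht1 : (t - 1).choose (r - 1) ≤ k) (ht2 : k < t.choose (r - 1))
    (H : FinHypergraph α) (hH : H.IsEdgeMaximal k r)
    (hn : H.verts.card = n) (hnt : t ≤ n) :
    H.edges.card ≤ t.choose r + (n - t) * k := by
  obtain ⟨hU, hs, -⟩ := hH
  have ht : 1 ≤ t := by
    by_contra! h0
    rw [Nat.lt_one_iff.mp h0, Nat.choose_eq_zero_of_lt (by omega)] at ht2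
    omega
  have hbound := card_induce_edges_le_edgeBound hr ht ht1 hU hs (subset_refl H.verts)
  rwa [induce_verts fun e he => (hU e he).1, hn, edgeBound_of_ge hnt] at hbound

/-- Let `k, r ≥ 2`, let `t = t(k,r)` (i.e. `C(t-1,r-1) ≤ k < C(t,r-1)`),
and let `H` be a `k`-edge-maximal `r`-uniform hypergraph on `n ≥ t` vertices.
Then `|E(H)| ≤ C(t,r) + (n-t)·k`. -/
theorem edge_maximal_upper_bound {α : Type*} [DecidableEq α] (k r t n : ℕ)
    (hk : 2 ≤ k) (hr : 2 ≤ r)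
    (ht1 : (t - 1).choose (r - 1) ≤ k) (ht2 : k < t.choose (r - 1))
    (H : FinHypergraph α) (hH : H.IsEdgeMaximal k r)
    (hn : H.verts.card = n) (hnt : t ≤ n) :
    H.edges.card ≤ t.choose r + (n - t) * k :=
  edge_maximal_upper_bound_general k r t n hr ht1 ht2 H hH hn hnt
end

section
/- Let k and r be integers with k ≥ 2 and r ≥ 2, and let t = t(k,r). Assume n ≥ t if C(t−1,r−1) = k, and n ≥ t+1 if C(t−1,r−1) < k. Then every hypergraph H in the family M(n;k,r) has minimum degree δ(H) = k. -/
/-! In the base hypergraph `K_t^r` every vertex has degree `C(t-1, r-1)`. Each added vertex gets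
degree exactly `k`, and no old degree drops below `k` after the first step: of the `k` new edges at
most `C(t-1, r-1)` can avoid a given vertex `u` of `K_t^r`, since they are determined by their
`r - 1` old vertices, so the degree of `u` grows by at least `k - C(t-1, r-1)`. Thus `δ(H) = k`
unless `H = K_t^r`, which the hypothesis on `n` allows only when `C(t-1, r-1) = k`. -/

open Finset

theorem Finset.card_filter_mem_powersetCard {α : Type*} [DecidableEq α] {V : Finset α} {u : α}
    {r : ℕ} (hu : u ∈ V) (hr : 1 ≤ r) :
    #{e ∈ V.powersetCard r | u ∈ e} = (#V - 1).choose (r - 1) := by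
  simpa [singleton_subset_iff] using
    card_filter_powersetCard_subset {u} V r (singleton_subset_iff.2 hu) (by simpa)

theorem Finset.card_filter_notMem_le_choose {α : Type*} [DecidableEq α]
    {E : Finset (Finset α)} {W : Finset α} {v u : α} {r : ℕ} (hv : v ∉ W) (hu : u ∈ W)
    (hr : 1 ≤ r) (hE : ∀ e ∈ E, v ∈ e ∧ e ⊆ insert v W ∧ #e = r) :
    #{e ∈ E | u ∉ e} ≤ (#W - 1).choose (r - 1) := by
  have hvu : v ≠ u := fun h => hv (h ▸ hu)
  calc #{e ∈ E | u ∉ e}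
      ≤ #{e ∈ ((insert v W).erase u).powersetCard r | v ∈ e} := by
        refine card_le_card fun e he => ?_
        obtain ⟨heE, hue⟩ := mem_filter.1 he
        obtain ⟨hve, heW, her⟩ := hE e heE
        refine mem_filter.2 ⟨mem_powersetCard.2 ⟨fun x hx => ?_, her⟩, hve⟩
        exact mem_erase.2 ⟨fun hxu => hue (hxu ▸ hx), heW hx⟩
    _ = (#W - 1).choose (r - 1) := by
        rw [card_filter_mem_powersetCard (mem_erase.2 ⟨hvu, mem_insert_self v W⟩) hr,
          card_erase_of_mem (mem_insert_of_mem hu), card_insert_of_notMem hv,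
          Nat.add_sub_cancel]

namespace FinHypergraph

variable {α : Type*} [DecidableEq α]

theorem degree_eq_zero_of_notMem {H : FinHypergraph α} {r : ℕ} {v : α} (hH : H.IsUniform r)
    (hv : v ∉ H.verts) : H.degree v = 0 :=
  card_eq_zero.2 <| filter_eq_empty_iff.2 fun e he hve => hv ((hH e he).1 hve)

theorem degree_mk_union {H : FinHypergraph α} {V : Finset α} {E : Finset (Finset α)}
    (hE : Disjoint H.edges E) (u : α) :
    (⟨V, H.edges ∪ E⟩ : FinHypergraph α).degree u = H.degree u + #{e ∈ E | u ∈ e} := by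
  rw [degree, filter_union, card_union_of_disjoint (disjoint_filter_filter hE), degree]

theorem MFamily.isUniform {k r t : ℕ} {H : FinHypergraph α} (hH : MFamily k r t H) :
    H.IsUniform r := by
  induction hH with
  | base V _ => exact fun e he => mem_powersetCard.1 he
  | step H v E _ _ _ hE ih =>
    intro e he
    rcases mem_union.1 he with he | he
    · exact ⟨(ih e he).1.trans (subset_insert v H.verts), (ih e he).2⟩
    · exact (hE e he).2

theorem isLeast_degree_step {H : FinHypergraph α} {v : α} {E : Finset (Finset α)} {k r : ℕ}
    (hH : H.IsUniform r) (hv : v ∉ H.verts) (hEk : #E = k) (hEv : ∀ e ∈ E, v ∈ e)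
    (hold : ∀ u ∈ H.verts, k ≤ H.degree u + #{e ∈ E | u ∈ e}) :
    IsLeast {d | ∃ w ∈ insert v H.verts,
      d = (⟨insert v H.verts, H.edges ∪ E⟩ : FinHypergraph α).degree w} k := by
  have hdisj : Disjoint H.edges E :=
    disjoint_left.2 fun e he heE => hv ((hH e he).1 (hEv e heE))
  have hdegv : (⟨insert v H.verts, H.edges ∪ E⟩ : FinHypergraph α).degree v = k := by
    rw [degree_mk_union hdisj, degree_eq_zero_of_notMem hH hv, filter_true_of_mem hEv, hEk,
      zero_add]
  refine ⟨⟨v, mem_insert_self v H.verts, hdegv.symm⟩, ?_⟩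
  rintro d ⟨w, hw, rfl⟩
  rcases mem_insert.1 hw with rfl | hw
  · exact hdegv.ge
  · exact (degree_mk_union hdisj w).symm ▸ hold w hw

theorem MFamily.eq_base_or_isLeast_degree {k r t : ℕ} {H : FinHypergraph α}
    (hr : 1 ≤ r) (hH : MFamily k r t H) :
    (#H.verts = t ∧ H.edges = H.verts.powersetCard r) ∨
      IsLeast {d | ∃ v ∈ H.verts, d = H.degree v} k := by
  induction hH with
  | base V hV => exact Or.inl ⟨hV, rfl⟩
  | step H v E hH hv hEk hE ih =>
    refine Or.inr (isLeast_degree_step hH.isUniform hv hEk (fun e he => (hE e he).1) ?_)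
    intro u hu
    rcases ih with ⟨hcard, hedges⟩ | hleast
    · have hdeg : H.degree u = (t - 1).choose (r - 1) := by
        rw [degree, hedges, card_filter_mem_powersetCard hu hr, hcard]
      have havoid := card_filter_notMem_le_choose hv hu hr hE
      have hsplit := card_filter_add_card_filter_not (s := E) (fun e => u ∈ e)
      rw [hcard] at havoid
      omega
    · exact (hleast.2 ⟨u, hu, rfl⟩).trans (Nat.le_add_right _ _)

end FinHypergraph

theorem MFamily_minDegree_general {α : Type*} [DecidableEq α] (k r t n : ℕ)
    (hr : 2 ≤ r)
    (ht1 : (t - 1).choose (r - 1) ≤ k) (ht2 : k < t.choose (r - 1))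
    (hn2 : (t - 1).choose (r - 1) < k → t + 1 ≤ n)
    (H : FinHypergraph α) (hH : FinHypergraph.MFamily k r t H) (hn : H.verts.card = n) :
    H.minDegree = k := by
  rcases hH.eq_base_or_isLeast_degree (by omega) with ⟨hcard, hedges⟩ | hleast
  · have hk : (t - 1).choose (r - 1) = k := by
      by_contra hne
      have := hn2 (lt_of_le_of_ne ht1 hne)
      omega
    have ht : t ≠ 0 := by
      rintro rfl
      rw [Nat.choose_eq_zero_of_lt (by omega)] at ht2
      omega
    have hdeg : ∀ u ∈ H.verts, H.degree u = k := fun u hu => by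
      rw [FinHypergraph.degree, hedges, card_filter_mem_powersetCard hu (by omega), hcard, hk]
    obtain ⟨u, hu⟩ : H.verts.Nonempty := card_pos.1 (by omega)
    refine IsLeast.csInf_eq ⟨⟨u, hu, (hdeg u hu).symm⟩, ?_⟩
    rintro d ⟨w, hw, rfl⟩
    exact (hdeg w hw).ge
  · exact hleast.csInf_eq

/-- Let `k, r ≥ 2`, `t = t(k,r)`, and `n ≥ t` if `C(t-1,r-1) = k`,
`n ≥ t+1` if `C(t-1,r-1) < k`. Then every `H ∈ M(n;k,r)` has minimum degree `δ(H) = k`. -/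
theorem MFamily_minDegree {α : Type*} [DecidableEq α] (k r t n : ℕ)
    (hk : 2 ≤ k) (hr : 2 ≤ r)
    (ht1 : (t - 1).choose (r - 1) ≤ k) (ht2 : k < t.choose (r - 1))
    (hn1 : (t - 1).choose (r - 1) = k → t ≤ n)
    (hn2 : (t - 1).choose (r - 1) < k → t + 1 ≤ n)
    (H : FinHypergraph α) (hH : FinHypergraph.MFamily k r t H) (hn : H.verts.card = n) :
    H.minDegree = k :=
  MFamily_minDegree_general k r t n hr ht1 ht2 hn2 H hH hn
end

section
/- Let k and r be integers with k ≥ 2 and r ≥ 2, and let t = t(k,r). Assume n ≥ t if C(t−1,r−1) = k, and n ≥ t+1 if C(t−1,r−1) < k. Then every hypergraph H in the family M(n;k,r) is super-edge-connected, i.e., every minimum edge-cut of H is the set of edges incident with a single vertex. -/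
namespace Nat

theorem le_of_one_lt_choose_sub_one {t r : ℕ} (h : 1 < t.choose (r - 1)) : r ≤ t := by
  by_contra! hlt
  rcases Nat.lt_or_ge t (r - 1) with hlt' | hge
  · rw [choose_eq_zero_of_lt hlt'] at h; omega
  · rw [show t = r - 1 by omega, choose_self] at h; omega

theorem choose_add_choose_lt_choose_add_sub_one {r a b : ℕ} (hr : 2 ≤ r) (ha : 2 ≤ a)
    (hb : 2 ≤ b) (hab : r < a + b) : a.choose r + b.choose r < (a + b - 1).choose r := by
  wlog hle : a ≤ b generalizing a b
  · simpa [add_comm] using this hb ha (by omega) (by omega)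
  obtain ⟨r, rfl⟩ : ∃ r', r = r' + 1 := ⟨r - 1, by omega⟩
  induction a, ha using Nat.le_induction generalizing b with
  | base =>
    rw [show 2 + b - 1 = b + 1 by omega, choose_succ_succ' b r]
    rcases hr.eq_or_lt with hr2 | hr3
    · obtain rfl : r = 1 := by omega
      simp only [choose_self, choose_one_right]; omega
    · rw [choose_eq_zero_of_lt (by omega : 2 < r + 1)]
      have := choose_pos (show r ≤ b by omega)
      omega
  | succ a ha ih =>
    have hmono : a.choose r ≤ b.choose r := choose_mono r (by omega)
    have := ih (b := b + 1) (by omega) (by omega) (by omega)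
    rw [choose_succ_succ' a r]
    rw [choose_succ_succ' b r, show a + (b + 1) - 1 = a + 1 + b - 1 by omega] at this
    omega

theorem choose_add_choose_add_choose_sub_one_lt {r a b : ℕ} (hr : 2 ≤ r) (ha : 2 ≤ a)
    (hb : 2 ≤ b) (hab : r ≤ a + b) :
    a.choose r + b.choose r + b.choose (r - 1) < (a + b).choose r := by
  rcases hab.eq_or_lt with rfl | hlt
  · rw [choose_self, choose_eq_zero_of_lt (by omega : a < a + b),
      choose_eq_zero_of_lt (by omega : b < a + b), choose_eq_zero_of_lt (by omega : b < a + b - 1)]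
    omega
  · obtain ⟨n, hn⟩ : ∃ n, a + b = n + 1 := ⟨a + b - 1, by omega⟩
    obtain ⟨r, rfl⟩ : ∃ r', r = r' + 1 := ⟨r - 1, by omega⟩
    have hA := choose_add_choose_lt_choose_add_sub_one hr ha hb hlt
    have hmono : b.choose r ≤ n.choose r := choose_mono r (by omega)
    rw [hn, choose_succ_succ' n r]
    rw [hn, Nat.add_sub_cancel] at hA
    simp only [Nat.add_sub_cancel]
    omega

end Nat

namespace Finset

variable {α : Type*} [DecidableEq α]

theorem subset_iff_not_nonempty_inter_sdiff {e V Z : Finset α} (he : e ⊆ V) :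
    e ⊆ Z ↔ ¬(e ∩ (V \ Z)).Nonempty := by
  rw [not_nonempty_iff_eq_empty, ← inter_sdiff_assoc, inter_eq_left.mpr he,
    sdiff_eq_empty_iff_subset]

theorem card_le_choose_of_forall_mem_subset_insert {F : Finset (Finset α)} {B : Finset α} {v : α}
    {r : ℕ} (hr : 0 < r) (hv : v ∉ B) (hF : ∀ e ∈ F, v ∈ e ∧ e ⊆ insert v B ∧ e.card = r) :
    F.card ≤ B.card.choose (r - 1) := by
  have hsub : F ⊆ ((insert v B).powersetCard r).filter ({v} ⊆ ·) := fun e he => by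
    obtain ⟨hve, heB, her⟩ := hF e he
    simpa [mem_powersetCard] using ⟨⟨heB, her⟩, hve⟩
  have := card_filter_powersetCard_subset {v} (insert v B) r
    (singleton_subset_iff.mpr (mem_insert_self v B)) (by rw [card_singleton]; omega)
  rw [card_insert_of_notMem hv, card_singleton, Nat.add_sub_cancel] at this
  exact this ▸ card_le_card hsub

end Finset

namespace FinHypergraph

open Finset

variable {α : Type*}

def complete (V : Finset α) (r : ℕ) : FinHypergraph α :=
  ⟨V, V.powersetCard r⟩

theorem isUniform_complete (V : Finset α) (r : ℕ) : (complete V r).IsUniform r :=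
  fun _ he => mem_powersetCard.mp he

variable [DecidableEq α] {H : FinHypergraph α} {r k : ℕ} {v : α} {E : Finset (Finset α)}

def NontrivialCutsExceed (H : FinHypergraph α) (k : ℕ) : Prop :=
  ∀ Y ⊆ H.verts, 2 ≤ Y.card → 2 ≤ (H.verts \ Y).card → k < (H.cut Y).card

theorem cut_sdiff (H : FinHypergraph α) {Y : Finset α} (hY : Y ⊆ H.verts) :
    H.cut (H.verts \ Y) = H.cut Y := by
  unfold cut
  rw [Finset.sdiff_sdiff_eq_self hY]
  exact filter_congr fun _ _ => and_comm

theorem edgeConn_le_card_cut {Y : Finset α} (hY : Y ⊆ H.verts) (hne : Y.Nonempty)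
    (hne' : Y ≠ H.verts) : H.edgeConn ≤ (H.cut Y).card :=
  Nat.sInf_le ⟨Y, hY, hne, hne', rfl⟩

theorem IsUniform.card_cut_singleton (hU : H.IsUniform r) (hr : 2 ≤ r) (u : α) :
    (H.cut {u}).card = H.degree u := by
  unfold cut degree
  congr 1
  refine filter_congr fun e he => ⟨fun ⟨⟨x, hx⟩, _⟩ => ?_, fun hu => ⟨⟨u, by simp [hu]⟩, ?_⟩⟩
  · simp only [mem_inter, mem_singleton] at hx
    exact hx.2 ▸ hx.1
  · obtain ⟨x, hx, hxu⟩ := exists_mem_ne (by rw [(hU e he).2]; omega) u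
    exact ⟨x, by simp [hx, hxu, (hU e he).1 hx]⟩

theorem IsUniform.edgeConn_le_degree (hU : H.IsUniform r) (hr : 2 ≤ r) {u : α}
    (hu : u ∈ H.verts) (hV : 2 ≤ H.verts.card) : H.edgeConn ≤ H.degree u := by
  rw [← hU.card_cut_singleton hr u]
  refine edgeConn_le_card_cut (singleton_subset_iff.mpr hu) (singleton_nonempty u) ?_
  rintro h
  rw [← h, card_singleton] at hV
  omega

theorem nontrivialCutsExceed_of_notMem (v : α)
    (h : ∀ Y ⊆ H.verts, v ∉ Y → 2 ≤ Y.card → 2 ≤ (H.verts \ Y).card → k < (H.cut Y).card) :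
    H.NontrivialCutsExceed k := by
  intro Y hY ha hb
  by_cases hvY : v ∈ Y
  · rw [← H.cut_sdiff hY]
    refine h _ sdiff_subset (fun hv => (mem_sdiff.mp hv).2 hvY) hb ?_
    rwa [Finset.sdiff_sdiff_eq_self hY]
  · exact h Y hY hvY ha hb

theorem IsMinEdgeCut.exists_eq_cut_singleton {X : Finset (Finset α)} (hX : H.IsMinEdgeCut X)
    (hk : H.edgeConn ≤ k) (hcut : H.NontrivialCutsExceed k) : ∃ v ∈ H.verts, X = H.cut {v} := by
  obtain ⟨⟨Y, hY, hne, hne', rfl⟩, hcard⟩ := hX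
  by_cases ha : Y.card = 1
  · obtain ⟨u, rfl⟩ := card_eq_one.mp ha
    exact ⟨u, hY (mem_singleton_self u), rfl⟩
  by_cases hb : (H.verts \ Y).card = 1
  · obtain ⟨u, hu⟩ := card_eq_one.mp hb
    refine ⟨u, (mem_sdiff.mp (hu ▸ mem_singleton_self u)).1, ?_⟩
    rw [← H.cut_sdiff hY, hu]
  have hb' : (H.verts \ Y).Nonempty := sdiff_nonempty.mpr fun h => hne' (hY.antisymm h)
  have := hcut Y hY (by have := hne.card_pos; omega) (by have := hb'.card_pos; omega)
  omega

theorem IsUniform.card_cut_add_card_induce_add_card_induce (hU : H.IsUniform r) (hr : 0 < r)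
    {Y : Finset α} (hY : Y ⊆ H.verts) :
    (H.cut Y).card + (H.induce Y).edges.card + (H.induce (H.verts \ Y)).edges.card =
      H.edges.card := by
  have hinY : (H.induce Y).edges = H.edges.filter fun e => ¬(e ∩ (H.verts \ Y)).Nonempty :=
    filter_congr fun e he => subset_iff_not_nonempty_inter_sdiff (hU e he).1
  have hinY' : (H.induce (H.verts \ Y)).edges = H.edges.filter fun e => ¬(e ∩ Y).Nonempty := by
    refine filter_congr fun e he => ?_
    rw [subset_iff_not_nonempty_inter_sdiff (hU e he).1, Finset.sdiff_sdiff_eq_self hY]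
  have hcover : ∀ e ∈ H.edges, ¬(e ∩ (H.verts \ Y)).Nonempty → ¬¬(e ∩ Y).Nonempty := by
    intro e he hB hA
    obtain ⟨x, hx⟩ := card_pos.mp ((hU e he).2 ▸ hr)
    by_cases hxY : x ∈ Y
    · exact hA ⟨x, mem_inter.mpr ⟨hx, hxY⟩⟩
    · exact hB ⟨x, mem_inter.mpr ⟨hx, mem_sdiff.mpr ⟨(hU e he).1 hx, hxY⟩⟩⟩
  rw [hinY, hinY', add_assoc, ← card_union_of_disjoint (disjoint_filter.mpr hcover),
    ← filter_or, cut, ← card_filter_add_card_filter_not (s := H.edges)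
      fun e => (e ∩ Y).Nonempty ∧ (e ∩ (H.verts \ Y)).Nonempty]
  congr 2
  exact filter_congr fun e _ => by tauto

theorem induce_complete_edges {V Y : Finset α} (hY : Y ⊆ V) :
    ((complete V r).induce Y).edges = Y.powersetCard r := by
  ext e
  simp only [complete, induce, mem_filter, mem_powersetCard]
  exact ⟨fun ⟨⟨_, h⟩, h'⟩ => ⟨h', h⟩, fun ⟨h, h'⟩ => ⟨⟨h.trans hY, h'⟩, h⟩⟩

theorem degree_complete (hr : 0 < r) {V : Finset α} {u : α} (hu : u ∈ V) :
    (complete V r).degree u = (V.card - 1).choose (r - 1) := by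
  have := card_filter_powersetCard_subset {u} V r (singleton_subset_iff.mpr hu)
    (by rw [card_singleton]; omega)
  simpa [degree, complete] using this

theorem card_cut_complete (hr : 0 < r) {V Y : Finset α} (hY : Y ⊆ V) :
    ((complete V r).cut Y).card + Y.card.choose r + (V \ Y).card.choose r = V.card.choose r := by
  have := (isUniform_complete V r).card_cut_add_card_induce_add_card_induce hr hY
  change _ + _ + ((complete V r).induce (V \ Y)).edges.card = (V.powersetCard r).card at this
  rwa [induce_complete_edges hY, induce_complete_edges sdiff_subset, card_powersetCard,
    card_powersetCard, card_powersetCard] at this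

theorem nontrivialCutsExceed_complete (hr : 2 ≤ r) {V : Finset α} (hV : r < V.card) :
    (complete V r).NontrivialCutsExceed ((V.card - 1).choose (r - 1)) := by
  intro Y (hY : Y ⊆ V) ha (hb : 2 ≤ (V \ Y).card)
  have hcut := card_cut_complete (r := r) (by omega) hY
  have hsum : Y.card + (V \ Y).card = V.card := by
    have := card_sdiff_add_card_eq_card hY; omega
  have hlt := Nat.choose_add_choose_lt_choose_add_sub_one hr ha hb (by omega)
  rw [Nat.choose_eq_choose_pred_add (n := V.card) (by omega) (by omega)] at hcut
  rw [hsum] at hlt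
  omega

theorem choose_card_sdiff_lt_card_cut_complete (hr : 2 ≤ r) {V Y : Finset α} (hV : r ≤ V.card)
    (hY : Y ⊆ V) (ha : 2 ≤ Y.card) (hb : 2 ≤ (V \ Y).card) :
    (V \ Y).card.choose (r - 1) < ((complete V r).cut Y).card := by
  have hcut := card_cut_complete (r := r) (by omega) hY
  have hsum : Y.card + (V \ Y).card = V.card := by
    have := card_sdiff_add_card_eq_card hY; omega
  have hlt := Nat.choose_add_choose_add_choose_sub_one_lt hr ha hb (by omega)
  rw [hsum] at hlt
  omega

def extend (H : FinHypergraph α) (v : α) (E : Finset (Finset α)) : FinHypergraph α :=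
  ⟨insert v H.verts, H.edges ∪ E⟩

theorem IsUniform.extend (hU : H.IsUniform r)
    (hE : ∀ e ∈ E, v ∈ e ∧ e ⊆ insert v H.verts ∧ e.card = r) : (H.extend v E).IsUniform r := by
  intro e he
  rcases mem_union.mp he with he | he
  · exact ⟨(hU e he).1.trans (subset_insert v H.verts), (hU e he).2⟩
  · exact (hE e he).2

theorem degree_le_degree_extend (u : α) : H.degree u ≤ (H.extend v E).degree u :=
  card_le_card (filter_subset_filter _ subset_union_left)

theorem IsUniform.degree_extend_self (hU : H.IsUniform r) (hv : v ∉ H.verts)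
    (hEv : ∀ e ∈ E, v ∈ e) : (H.extend v E).degree v = E.card := by
  rw [degree, FinHypergraph.extend, filter_union, filter_true_of_mem hEv,
    filter_false_of_mem fun e he hve => hv ((hU e he).1 hve), empty_union]

theorem IsUniform.card_cut_extend (hU : H.IsUniform r) (hv : v ∉ H.verts)
    (hEv : ∀ e ∈ E, v ∈ e) {Y : Finset α} (hY : Y ⊆ H.verts) :
    ((H.extend v E).cut Y).card = (H.cut Y).card + (E.filter fun e => (e ∩ Y).Nonempty).card := by
  have hvY : v ∉ Y := fun h => hv (hY h)
  have hcut : (H.extend v E).cut Y = H.cut Y ∪ E.filter fun e => (e ∩ Y).Nonempty := by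
    rw [cut, cut, FinHypergraph.extend, filter_union]
    simp only [insert_sdiff_of_notMem _ hvY]
    congr 1
    · refine filter_congr fun e he => ?_
      rw [inter_insert_of_notMem fun hve => hv ((hU e he).1 hve)]
    · exact filter_congr fun e he =>
        and_iff_left ⟨v, mem_inter.mpr ⟨hEv e he, mem_insert_self v _⟩⟩
  rw [hcut, card_union_of_disjoint]
  exact disjoint_left.mpr fun e h1 h2 =>
    hv ((hU e (mem_filter.mp h1).1).1 (hEv e (mem_filter.mp h2).1))

theorem card_filter_not_nonempty_inter_le (hr : 0 < r) (hv : v ∉ H.verts)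
    (hE : ∀ e ∈ E, v ∈ e ∧ e ⊆ insert v H.verts ∧ e.card = r) (Y : Finset α) :
    (E.filter fun e => ¬(e ∩ Y).Nonempty).card ≤ (H.verts \ Y).card.choose (r - 1) := by
  refine card_le_choose_of_forall_mem_subset_insert hr (fun h => hv (mem_sdiff.mp h).1)
    fun e he => ?_
  obtain ⟨heE, heY⟩ := mem_filter.mp he
  obtain ⟨hve, hsub, hcard⟩ := hE e heE
  refine ⟨hve, fun x hx => ?_, hcard⟩
  rcases mem_insert.mp (hsub hx) with rfl | hxV
  · exact mem_insert_self x _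
  · exact mem_insert_of_mem (mem_sdiff.mpr ⟨hxV, fun hxY => heY ⟨x, mem_inter.mpr ⟨hx, hxY⟩⟩⟩)

theorem IsUniform.nontrivialCutsExceed_extend (hU : H.IsUniform r) (hr : 0 < r)
    (hv : v ∉ H.verts) (hE : ∀ e ∈ E, v ∈ e ∧ e ⊆ insert v H.verts ∧ e.card = r)
    (hH : ∀ Y ⊆ H.verts, 2 ≤ Y.card → 1 ≤ (H.verts \ Y).card →
      min E.card ((H.verts \ Y).card.choose (r - 1)) < (H.cut Y).card) :
    (H.extend v E).NontrivialCutsExceed E.card := by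
  refine nontrivialCutsExceed_of_notMem v fun Y hY hvY ha hb => ?_
  have hYV : Y ⊆ H.verts := (subset_insert_iff_of_notMem hvY).mp hY
  have hb' : (insert v H.verts \ Y).card = (H.verts \ Y).card + 1 := by
    rw [insert_sdiff_of_notMem _ hvY, card_insert_of_notMem fun h => hv (mem_sdiff.mp h).1]
  have hcut := hU.card_cut_extend hv (fun e he => (hE e he).1) hYV
  have hsplit := card_filter_add_card_filter_not (s := E) fun e => (e ∩ Y).Nonempty
  have hout := card_filter_not_nonempty_inter_le hr hv hE Y
  have := hH Y hYV ha (by change 2 ≤ (insert v H.verts \ Y).card at hb; omega)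
  omega

namespace MFamily

variable {t : ℕ}

theorem isUniform_s7 (hH : MFamily k r t H) : H.IsUniform r := by
  induction hH with
  | base V _ => exact isUniform_complete V r
  | step H v E _ _ _ hE ih => exact ih.extend hE

theorem le_card_verts (hH : MFamily k r t H) : t ≤ H.verts.card := by
  induction hH with
  | base V hV => exact hV.ge
  | step H v E _ _ _ _ ih => exact ih.trans (card_le_card (subset_insert v H.verts))

theorem choose_le_degree (hH : MFamily k r t H) (hr : 0 < r)
    (ht1 : (t - 1).choose (r - 1) ≤ k) {u : α} (hu : u ∈ H.verts) :
    (t - 1).choose (r - 1) ≤ H.degree u := by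
  induction hH with
  | base V hV => exact hV ▸ (degree_complete hr hu).ge
  | step H v E hM hv hEk hE ih =>
    rcases mem_insert.mp hu with rfl | hu
    · change _ ≤ (H.extend u E).degree u
      rw [hM.isUniform_s7.degree_extend_self hv fun e he => (hE e he).1, hEk]
      exact ht1
    · exact (ih hu).trans (degree_le_degree_extend u)

theorem exists_degree_le (hH : MFamily k r t H) (hr : 0 < r) (ht : 0 < t)
    (ht1 : (t - 1).choose (r - 1) ≤ k) : ∃ u ∈ H.verts, H.degree u ≤ k := by
  cases hH with
  | base V hV =>
    obtain ⟨u, hu⟩ := card_pos.mp (hV ▸ ht)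
    refine ⟨u, hu, ?_⟩
    change (complete V r).degree u ≤ k
    rwa [degree_complete hr hu, hV]
  | step H v E hM hv hEk hE =>
    refine ⟨v, mem_insert_self v H.verts, ?_⟩
    change (H.extend v E).degree v ≤ k
    rw [hM.isUniform_s7.degree_extend_self hv fun e he => (hE e he).1, hEk]

theorem eq_complete_or_nontrivialCutsExceed (hH : MFamily k r t H) (hk : 2 ≤ k) (hr : 2 ≤ r)
    (ht1 : (t - 1).choose (r - 1) ≤ k) (ht2 : k < t.choose (r - 1)) :
    (∃ V : Finset α, V.card = t ∧ H = complete V r) ∨ H.NontrivialCutsExceed k := by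
  have hrt : r ≤ t := Nat.le_of_one_lt_choose_sub_one (by omega)
  have hdeg : Nat.choose 1 (r - 1) < (t - 1).choose (r - 1) := by
    rcases hr.eq_or_lt with rfl | hr3
    · simp only [Nat.add_one_sub_one, Nat.choose_one_right] at ht2 ⊢
      omega
    · rw [Nat.choose_eq_zero_of_lt (by omega : 1 < r - 1)]
      exact Nat.choose_pos (by omega)
  induction hH with
  | base V hV => exact Or.inl ⟨V, hV, rfl⟩
  | step H v E hM hv hEk hE ih =>
    refine Or.inr (hEk ▸ hM.isUniform_s7.nontrivialCutsExceed_extend (by omega) hv hE ?_)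
    intro Y hY ha hb
    rcases hb.eq_or_lt with hb | hb
    · obtain ⟨u, hu⟩ := card_eq_one.mp hb.symm
      have huV : u ∈ H.verts := (mem_sdiff.mp (hu ▸ mem_singleton_self u)).1
      rw [← H.cut_sdiff hY, hu, hM.isUniform_s7.card_cut_singleton hr, card_singleton]
      exact (min_le_right _ _).trans_lt (hdeg.trans_le (hM.choose_le_degree (by omega) ht1 huV))
    · rcases ih with ⟨V, hV, rfl⟩ | hcut
      · exact (min_le_right _ _).trans_lt
          (choose_card_sdiff_lt_card_cut_complete hr (hV ▸ hrt) hY ha hb)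
      · exact (min_le_left _ _).trans_lt (hEk ▸ hcut Y hY ha hb)

end MFamily

end FinHypergraph

theorem MFamily_super_edge_connected_general {α : Type*} [DecidableEq α] (k r t n : ℕ)
    (hk : 2 ≤ k) (hr : 2 ≤ r)
    (ht1 : (t - 1).choose (r - 1) ≤ k) (ht2 : k < t.choose (r - 1))
    (hn2 : (t - 1).choose (r - 1) < k → t + 1 ≤ n)
    (H : FinHypergraph α) (hH : FinHypergraph.MFamily k r t H) (hn : H.verts.card = n) :
    ∀ X : Finset (Finset α), H.IsMinEdgeCut X → ∃ v ∈ H.verts, X = H.cut {v} := by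
  have hrt : r ≤ t := Nat.le_of_one_lt_choose_sub_one (by omega)
  have htn : t ≤ n := hn ▸ hH.le_card_verts
  obtain ⟨u, hu, hdeg⟩ := hH.exists_degree_le (by omega) (by omega) ht1
  have hconn : H.edgeConn ≤ k :=
    (hH.isUniform_s7.edgeConn_le_degree hr hu (by omega)).trans hdeg
  intro X hX
  refine hX.exists_eq_cut_singleton hconn ?_
  rcases hH.eq_complete_or_nontrivialCutsExceed hk hr ht1 ht2 with ⟨V, hV, rfl⟩ | hcut
  · have hkt : (t - 1).choose (r - 1) = k := by
      by_contra hne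
      have := hn2 (by omega)
      change V.card = n at hn
      omega
    have hrt' : r < t := by
      refine hrt.lt_of_ne fun hrt => ?_
      rw [← hrt, Nat.choose_self] at hkt
      omega
    have := FinHypergraph.nontrivialCutsExceed_complete hr (hV ▸ hrt')
    rwa [hV, hkt] at this
  · exact hcut

/-- Let `k, r ≥ 2`, `t = t(k,r)`, and `n ≥ t` if `C(t-1,r-1) = k`,
`n ≥ t+1` if `C(t-1,r-1) < k`. Then every `H ∈ M(n;k,r)` is super-edge-connected:
every minimum edge-cut of `H` is the set of edges incident with a single vertex. -/
theorem MFamily_super_edge_connected {α : Type*} [DecidableEq α] (k r t n : ℕ)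
    (hk : 2 ≤ k) (hr : 2 ≤ r)
    (ht1 : (t - 1).choose (r - 1) ≤ k) (ht2 : k < t.choose (r - 1))
    (hn1 : (t - 1).choose (r - 1) = k → t ≤ n)
    (hn2 : (t - 1).choose (r - 1) < k → t + 1 ≤ n)
    (H : FinHypergraph α) (hH : FinHypergraph.MFamily k r t H) (hn : H.verts.card = n) :
    ∀ X : Finset (Finset α), H.IsMinEdgeCut X → ∃ v ∈ H.verts, X = H.cut {v} :=
  MFamily_super_edge_connected_general k r t n hk hr ht1 ht2 hn2 H hH hn
end

section
/- Let k, t, r be integers with t > r > 2, k = C(t−1,r−1), and kr ≥ 2t, and let n = st with s ≥ 2. Then for any tree T on s vertices, every hypergraph H in the family N(T) satisfies |E(H)| = (n−1)·k − ((t−1)·k − C(t,r))·⌊n/t⌋; consequently the lower bound (n−1)·k − ((t−1)·k − C(t,r))·⌊n/t⌋ on the size of k-edge-maximal r-uniform hypergraphs is attained. -/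
/-- The family `N(T)` for a tree `T` (with vertex type `β`): replace each vertex `i` of `T`
by a complete `r`-uniform hypergraph on a `t`-set `W i` (the `W i` pairwise disjoint), and
for each tree edge `ij` add a set `E i j` of `k` edges of cardinality `r`, each contained in
`W i ∪ W j` and meeting both `W i` and `W j`, such that every vertex of `W i ∪ W j` lies in
some edge of `E i j`. -/
def NFamily {α β : Type*} [DecidableEq α] [Fintype β] [DecidableEq β]
    (T : SimpleGraph β) [DecidableRel T.Adj] (k r t : ℕ) (H : FinHypergraph α) : Prop :=
  ∃ (W : β → Finset α) (E : β → β → Finset (Finset α)),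
    (∀ i, (W i).card = t) ∧
    (∀ i j, i ≠ j → Disjoint (W i) (W j)) ∧
    (∀ i j, E i j = E j i) ∧
    (∀ i j, T.Adj i j →
      (E i j).card = k ∧
      (∀ e ∈ E i j, e.card = r ∧ e ⊆ W i ∪ W j ∧
        (e ∩ W i).Nonempty ∧ (e ∩ W j).Nonempty) ∧
      (∀ u ∈ W i ∪ W j, ∃ e ∈ E i j, u ∈ e)) ∧
    H.verts = Finset.univ.biUnion W ∧
    H.edges = (Finset.univ.biUnion fun i => (W i).powersetCard r) ∪
      Finset.univ.biUnion (fun i => Finset.univ.biUnion fun j =>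
        if T.Adj i j then E i j else ∅)

/-!
The hypergraph splits into the edges of the `s` complete pieces, `C(t,r)` each, and the `k`
edges attached to each of the `s - 1` tree edges. These families are pairwise disjoint because
an edge inside a piece meets only that piece, while an edge of `E i j` meets exactly the two
pieces `W i` and `W j`, which determine the tree edge `ij`. Hence
`|E(H)| = s·C(t,r) + (s-1)·k`, which is the stated formula since `n = st`.
-/

open Finset Function

section Blowup

variable {α β : Type*} [DecidableEq α] {W : β → Finset α}

theorem mem_sym2_of_inter_nonempty_of_subset_union (hW : Pairwise (Disjoint on W))
    {f : Finset α} {i a b : β} (hi : (f ∩ W i).Nonempty) (hf : f ⊆ W a ∪ W b) :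
    i ∈ s(a, b) := by
  obtain ⟨x, hx⟩ := hi
  rw [mem_inter] at hx
  rw [Sym2.mem_iff]
  by_contra! h
  rcases mem_union.1 (hf hx.1) with ha | hb
  · exact disjoint_left.1 (hW h.1) hx.2 ha
  · exact disjoint_left.1 (hW h.2) hx.2 hb

theorem Finset.disjoint_powersetCard_of_disjoint {s t : Finset α} {r : ℕ} (hst : Disjoint s t)
    (hr : 0 < r) : Disjoint (s.powersetCard r) (t.powersetCard r) := by
  refine disjoint_left.2 fun f hfs hft => ?_
  rw [mem_powersetCard] at hfs hft
  have hf : f = ∅ := subset_empty.1 (disjoint_iff_inter_eq_empty.1 hst ▸ subset_inter hfs.1 hft.1)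
  rw [hf, card_empty] at hfs
  omega

def Crosses (W : β → Finset α) (i j : β) (f : Finset α) : Prop :=
  f ⊆ W i ∪ W j ∧ (f ∩ W i).Nonempty ∧ (f ∩ W j).Nonempty

variable [Fintype β]

def pieceEdges (W : β → Finset α) (r : ℕ) : Finset (Finset α) :=
  univ.biUnion fun i => (W i).powersetCard r

def crossingEdges (G : SimpleGraph β) [DecidableRel G.Adj] (E : β → β → Finset (Finset α)) :
    Finset (Finset α) :=
  univ.biUnion fun i => univ.biUnion fun j => if G.Adj i j then E i j else ∅

theorem card_pieceEdges (hW : Pairwise (Disjoint on W)) {r : ℕ} (hr : 0 < r) :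
    #(pieceEdges W r) = ∑ i, (W i).card.choose r := by
  rw [pieceEdges, card_biUnion fun i _ j _ hij => disjoint_powersetCard_of_disjoint (hW hij) hr]
  simp only [card_powersetCard]

variable (G : SimpleGraph β) [DecidableRel G.Adj] {E : β → β → Finset (Finset α)}

theorem mem_crossingEdges {f : Finset α} :
    f ∈ crossingEdges G E ↔ ∃ i j, G.Adj i j ∧ f ∈ E i j := by
  simp only [crossingEdges, mem_biUnion, mem_univ, true_and]
  refine exists_congr fun i => exists_congr fun j => ?_
  split_ifs with h <;> simp [h]

theorem disjoint_pieceEdges_crossingEdges (hW : Pairwise (Disjoint on W)) {r : ℕ}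
    (hE : ∀ i j, G.Adj i j → ∀ f ∈ E i j, Crosses W i j f) :
    Disjoint (pieceEdges W r) (crossingEdges G E) := by
  refine disjoint_left.2 fun f hpiece hcross => ?_
  obtain ⟨l, -, hfl⟩ := mem_biUnion.1 hpiece
  obtain ⟨i, j, hij, hf⟩ := (mem_crossingEdges G).1 hcross
  obtain ⟨-, hi, hj⟩ := hE i j hij f hf
  have hsub : f ⊆ W l ∪ W l := (union_self (W l)).symm ▸ (mem_powersetCard.1 hfl).1
  have hil := mem_sym2_of_inter_nonempty_of_subset_union hW hi hsub
  have hjl := mem_sym2_of_inter_nonempty_of_subset_union hW hj hsub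
  simp only [Sym2.mem_iff, or_self] at hil hjl
  exact G.ne_of_adj hij (hil.trans hjl.symm)

theorem crossingEdges_eq_biUnion_edgeFinset (hsymm : ∀ i j, E i j = E j i) :
    crossingEdges G E = G.edgeFinset.biUnion (Sym2.lift ⟨E, hsymm⟩) := by
  ext f
  rw [mem_crossingEdges, mem_biUnion, Sym2.exists]
  simp only [SimpleGraph.mem_edgeFinset, SimpleGraph.mem_edgeSet, Sym2.lift_mk]

theorem card_crossingEdges (hW : Pairwise (Disjoint on W)) (hsymm : ∀ i j, E i j = E j i)
    (hE : ∀ i j, G.Adj i j → ∀ f ∈ E i j, Crosses W i j f)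
    {k : ℕ} (hk : ∀ i j, G.Adj i j → #(E i j) = k) :
    #(crossingEdges G E) = #G.edgeFinset * k := by
  rw [crossingEdges_eq_biUnion_edgeFinset G hsymm, card_biUnion, sum_const_nat]
  · rintro ⟨i, j⟩ hij
    exact hk i j (SimpleGraph.mem_edgeFinset.1 hij)
  · rintro ⟨i, j⟩ hij ⟨i', j'⟩ hij' hne
    replace hij : G.Adj i j := SimpleGraph.mem_edgeFinset.1 hij
    replace hij' : G.Adj i' j' := SimpleGraph.mem_edgeFinset.1 hij'
    refine disjoint_left.2 fun f hf hf' => hne ?_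
    obtain ⟨-, hi, hj⟩ := hE i j hij f hf
    obtain ⟨hsub, -⟩ := hE i' j' hij' f hf'
    exact Sym2.eq_of_ne_mem (G.ne_of_adj hij) (Sym2.mem_mk_left i j) (Sym2.mem_mk_right i j)
      (mem_sym2_of_inter_nonempty_of_subset_union hW hi hsub)
      (mem_sym2_of_inter_nonempty_of_subset_union hW hj hsub)

end Blowup

theorem NFamily_size_general {α β : Type*} [DecidableEq α] [Fintype β] [DecidableEq β]
    (k t r s n : ℕ) (hrt : r < t) (hr : 2 < r)
    (hn : n = s * t)
    (T : SimpleGraph β) [DecidableRel T.Adj] (hT : T.IsTree) (hβ : Fintype.card β = s)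
    (H : FinHypergraph α) (hH : NFamily T k r t H) :
    (H.edges.card : ℤ) =
      ((n : ℤ) - 1) * k - (((t : ℤ) - 1) * k - (t.choose r : ℤ)) * ((n / t : ℕ) : ℤ) := by
  obtain ⟨W, E, hWcard, hWdisj, hsymm, hEadj, -, hedges⟩ := hH
  have hW : Pairwise (Disjoint on W) := fun i j hij => hWdisj i j hij
  have hE : ∀ i j, T.Adj i j → ∀ f ∈ E i j, Crosses W i j f :=
    fun i j hij f hf => ((hEadj i j hij).2.1 f hf).2
  have hcard : #H.edges = s * t.choose r + #T.edgeFinset * k := by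
    rw [hedges, ← pieceEdges, ← crossingEdges,
      card_union_of_disjoint (disjoint_pieceEdges_crossingEdges T hW hE),
      card_pieceEdges hW (by omega), card_crossingEdges T hW hsymm hE fun i j h => (hEadj i j h).1]
    simp [hWcard, hβ]
  have hs : #T.edgeFinset + 1 = s := hβ ▸ hT.card_edgeFinset
  have hnt : n / t = s := by rw [hn, Nat.mul_div_cancel _ (by omega)]
  rw [hcard, hnt, hn, ← hs]
  push_cast
  ring

/-- Let `t > r > 2`, `k = C(t-1,r-1)`, `kr ≥ 2t`, and `n = st` with
`s ≥ 2`. Then for any tree `T` on `s` vertices, every `H ∈ N(T)` satisfies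
`|E(H)| = (n-1)·k - ((t-1)·k - C(t,r))·⌊n/t⌋`; hence the lower bound of Theorem 4.1
is attained. -/
theorem NFamily_size {α β : Type*} [DecidableEq α] [Fintype β] [DecidableEq β]
    (k t r s n : ℕ) (hrt : r < t) (hr : 2 < r)
    (hk : k = (t - 1).choose (r - 1)) (hkr : 2 * t ≤ k * r)
    (hn : n = s * t) (hs : 2 ≤ s)
    (T : SimpleGraph β) [DecidableRel T.Adj] (hT : T.IsTree) (hβ : Fintype.card β = s)
    (H : FinHypergraph α) (hH : NFamily T k r t H) :
    (H.edges.card : ℤ) =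
      ((n : ℤ) - 1) * k - (((t : ℤ) - 1) * k - (t.choose r : ℤ)) * ((n / t : ℕ) : ℤ) :=
  NFamily_size_general k t r s n hrt hr hn T hT hβ H hH
end

section
/- Let k ≥ 1 be an integer and let G be a k-edge-maximal (simple) graph on n vertices with n > k+1. Then |E(G)| ≥ (n−1)·k − ⌊n/(k+2)⌋·C(k,2). -/
/-!
In a `k`-edge-maximal graph on at least `k + 2` vertices every edge cut has at least `k` edges:
a smaller cut `∂Y` leaves some pair across it missing (there are `|Y| |V \ Y| ≥ n - 1` such
pairs), and adding that pair creates no subgraph of edge-connectivity `k + 1`, since such a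
subgraph would meet both sides of `Y` and be cut by at most `|∂Y| + 1 ≤ k` edges. For the same reason, cutting `G` along a cut of size `k` leaves two
`k`-edge-maximal induced subgraphs, with `k` edges between them.

Induct on `n`. For `n = k + 2`, at most one pair is missing, so `G` has `C(k + 2, 2) - 1` edges.
Otherwise cut off a vertex of degree `k` if there is one; if not, every degree is at least
`k + 1`, so both sides of a minimum cut have at least `k + 2` vertices and induction applies to
both. The bound `(n - 1) k - ⌊n / (k + 2)⌋ C(k, 2)` survives both steps because `⌊· / (k + 2)⌋`
is superadditive.
-/

lemma Finset.singleton_ssubset_of_mem_of_one_lt_card {α : Type*} {s : Finset α} {a : α}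
    (ha : a ∈ s) (hs : 1 < s.card) : {a} ⊂ s :=
  ssubset_of_subset_of_ne (singleton_subset_iff.mpr ha) fun h => by simp [← h] at hs

namespace FinHypergraph

open Finset

variable {α : Type*} {G H K : FinHypergraph α}

lemma IsSub.refl (H : FinHypergraph α) : H.IsSub H := ⟨subset_rfl, subset_rfl⟩

lemma IsSub.trans (h : H.IsSub K) (h' : K.IsSub G) : H.IsSub G :=
  ⟨h.1.trans h'.1, h.2.trans h'.2⟩

variable [DecidableEq α] {A X Y e : Finset α} {k r : ℕ}

lemma eq_pair_of_card_le_two {x y : α} (he : e.card ≤ 2) (hx : x ∈ e) (hy : y ∈ e)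
    (hxy : x ≠ y) : e = {x, y} :=
  (eq_of_subset_of_card_le (by simp [insert_subset_iff, hx, hy]) (by rwa [card_pair hxy])).symm

lemma induce_isSub (hA : A ⊆ G.verts) : (G.induce A).IsSub G := ⟨hA, filter_subset _ _⟩

lemma isSub_of_isSub_addEdge (h : H.IsSub (G.addEdge e)) (he : e ∉ H.edges) : H.IsSub G :=
  ⟨h.1, fun f hf => (mem_insert.mp (h.2 hf)).resolve_left (by rintro rfl; exact he hf)⟩

lemma cut_subset_edges (G : FinHypergraph α) (X : Finset α) : G.cut X ⊆ G.edges :=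
  filter_subset _ _

lemma edgeConn_le_card_cut_s17 (hX : X ⊂ G.verts) (hne : X.Nonempty) :
    G.edgeConn ≤ (G.cut X).card :=
  Nat.sInf_le ⟨X, hX.subset, hne, hX.ne, rfl⟩

lemma exists_card_cut_eq_edgeConn (h : 1 < G.verts.card) :
    ∃ X ⊂ G.verts, X.Nonempty ∧ (G.cut X).card = G.edgeConn := by
  obtain ⟨x, hx, y, hy, hxy⟩ := one_lt_card.mp h
  have hcuts : {d | ∃ X : Finset α, X ⊆ G.verts ∧ X.Nonempty ∧ X ≠ G.verts ∧
      d = (G.cut X).card}.Nonempty :=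
    ⟨_, {x}, singleton_subset_iff.mpr hx, singleton_nonempty x,
      fun h => hxy (mem_singleton.mp (h ▸ hy)).symm, rfl⟩
  obtain ⟨X, hXV, hne, hXne, hcard⟩ := Nat.sInf_mem hcuts
  exact ⟨X, ssubset_of_subset_of_ne hXV hXne, hne, hcard.symm⟩

lemma edgeConn_eq_zero_of_card_le_one (h : G.verts.card ≤ 1) : G.edgeConn = 0 := by
  refine Nat.sInf_eq_zero.mpr (Or.inr (Set.eq_empty_of_forall_notMem ?_))
  rintro d ⟨X, hXV, hne, hXne, -⟩
  exact hXne (eq_of_subset_of_card_le hXV (h.trans (one_le_card.mpr hne)))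

lemma edgeConn_le_card_edges_s17 (G : FinHypergraph α) : G.edgeConn ≤ G.edges.card := by
  rcases lt_or_ge 1 G.verts.card with h | h
  · obtain ⟨X, -, -, hX⟩ := exists_card_cut_eq_edgeConn h
    exact hX ▸ card_le_card (cut_subset_edges G X)
  · simp [edgeConn_eq_zero_of_card_le_one h]

lemma bddAbove_edgeConn_isSub (G : FinHypergraph α) :
    BddAbove {d : ℕ | ∃ H : FinHypergraph α, H.IsSub G ∧ d = H.edgeConn} := by
  refine ⟨G.edges.card, ?_⟩
  rintro d ⟨H, hH, rfl⟩
  exact (edgeConn_le_card_edges_s17 H).trans (card_le_card hH.2)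

lemma edgeConn_le_strength_s17 (h : H.IsSub G) : H.edgeConn ≤ G.strength :=
  le_csSup (bddAbove_edgeConn_isSub G) ⟨H, h, rfl⟩

lemma exists_isSub_edgeConn_eq_strength (G : FinHypergraph α) :
    ∃ H : FinHypergraph α, H.IsSub G ∧ H.edgeConn = G.strength := by
  have hne : {d : ℕ | ∃ H : FinHypergraph α, H.IsSub G ∧ d = H.edgeConn}.Nonempty :=
    ⟨_, G, IsSub.refl G, rfl⟩
  obtain ⟨H, hH, h⟩ := Nat.sSup_mem hne (bddAbove_edgeConn_isSub G)
  exact ⟨H, hH, h.symm⟩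

lemma strength_mono (h : H.IsSub G) : H.strength ≤ G.strength := by
  obtain ⟨K, hK, hKH⟩ := exists_isSub_edgeConn_eq_strength H
  exact hKH ▸ edgeConn_le_strength_s17 (hK.trans h)

lemma cut_inter_subset (h : H.IsSub K) (X : Finset α) : H.cut (H.verts ∩ X) ⊆ K.cut X := by
  intro f hf
  simp only [cut, mem_filter] at hf ⊢
  obtain ⟨hf, ⟨x, hx⟩, ⟨y, hy⟩⟩ := hf
  simp only [mem_inter, mem_sdiff] at hx hy
  exact ⟨h.2 hf, ⟨x, mem_inter.mpr ⟨hx.1, hx.2.2⟩⟩,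
    ⟨y, mem_inter.mpr ⟨hy.1, mem_sdiff.mpr ⟨h.1 hy.2.1, fun hyX => hy.2.2 ⟨hy.2.1, hyX⟩⟩⟩⟩⟩

lemma edgeConn_le_card_cut_of_isSub (h : H.IsSub K) (hne : (H.verts ∩ X).Nonempty)
    (hout : ¬ H.verts ⊆ X) : H.edgeConn ≤ (K.cut X).card :=
  (edgeConn_le_card_cut_s17 (ssubset_of_subset_of_ne inter_subset_left
    fun h => hout (h ▸ inter_subset_right)) hne).trans
    (card_le_card (cut_inter_subset h X))

lemma cut_addEdge_subset (G : FinHypergraph α) (e X : Finset α) :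
    (G.addEdge e).cut X ⊆ insert e (G.cut X) := by
  unfold cut addEdge
  rw [filter_insert]
  split_ifs
  · exact insert_subset_insert _ subset_rfl
  · exact subset_insert _ _

lemma cut_addEdge_of_subset (he : e ⊆ X) : (G.addEdge e).cut X = G.cut X := by
  unfold cut addEdge
  rw [filter_insert, if_neg]
  rintro ⟨-, x, hx⟩
  simp only [mem_inter, mem_sdiff] at hx
  exact hx.2.2 (he hx.1)

lemma cut_compl (hA : A ⊆ G.verts) : G.cut (G.verts \ A) = G.cut A := by
  unfold cut
  rw [Finset.sdiff_sdiff_eq_self hA]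
  ext f
  simp only [mem_filter]
  tauto

lemma card_cut_singleton_le_degree (G : FinHypergraph α) (v : α) :
    (G.cut {v}).card ≤ G.degree v := by
  refine card_le_card fun f hf => ?_
  obtain ⟨hf, ⟨x, hx⟩, -⟩ := mem_filter.mp hf
  rw [mem_inter, mem_singleton] at hx
  exact mem_filter.mpr ⟨hf, hx.2 ▸ hx.1⟩

lemma card_cut_singleton_le (h2 : ∀ f ∈ G.edges, f.card ≤ 2) {w : α} {S : Finset α}
    (hS : ∀ y ∈ G.verts, y ≠ w → {w, y} ∈ G.edges → y ∈ S) : (G.cut {w}).card ≤ S.card := by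
  refine (card_le_card fun f hf => ?_).trans (card_image_le (f := fun y => ({w, y} : Finset α)))
  obtain ⟨hf, ⟨x, hx⟩, ⟨y, hy⟩⟩ := mem_filter.mp hf
  simp only [mem_inter, mem_singleton, mem_sdiff] at hx hy
  obtain ⟨hy, hyV, hyw⟩ := hy
  have hfwy : f = {w, y} := eq_pair_of_card_le_two (h2 f hf) (hx.2 ▸ hx.1) hy (Ne.symm hyw)
  exact mem_image.mpr ⟨y, hS y hyV hyw (hfwy ▸ hf), hfwy.symm⟩

lemma edgeConn_le_card_verts_sub_one (h2 : ∀ f ∈ G.edges, f.card ≤ 2) :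
    G.edgeConn ≤ G.verts.card - 1 := by
  rcases lt_or_ge 1 G.verts.card with h | h
  · obtain ⟨w, hw⟩ := card_pos.mp (zero_lt_one.trans h)
    calc G.edgeConn ≤ (G.cut {w}).card :=
          edgeConn_le_card_cut_s17 (singleton_ssubset_of_mem_of_one_lt_card hw h) (singleton_nonempty w)
      _ ≤ (G.verts.erase w).card :=
          card_cut_singleton_le h2 fun y hy hyw _ => mem_erase.mpr ⟨hyw, hy⟩
      _ = G.verts.card - 1 := card_erase_of_mem hw
  · simp [edgeConn_eq_zero_of_card_le_one h]

/-- An edge of size at most two that crosses a cut has both ends in the vertex set. -/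
lemma edgeConn_induce_verts (h2 : ∀ f ∈ G.edges, f.card ≤ 2) :
    (G.induce G.verts).edgeConn = G.edgeConn := by
  have hcut : ∀ X ⊆ G.verts, (G.induce G.verts).cut X = G.cut X := by
    intro X hX
    ext f
    simp only [cut, mem_filter]
    simp only [induce, mem_filter]
    refine ⟨fun ⟨⟨hf, _⟩, hcross⟩ => ⟨hf, hcross⟩, fun ⟨hf, ⟨x, hx⟩, ⟨y, hy⟩⟩ => ?_⟩
    simp only [mem_inter, mem_sdiff] at hx hy
    refine ⟨⟨hf, ?_⟩, ⟨x, mem_inter.mpr hx⟩, ⟨y, mem_inter.mpr ⟨hy.1, mem_sdiff.mpr hy.2⟩⟩⟩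
    rw [eq_pair_of_card_le_two (h2 f hf) hx.1 hy.1 (by rintro rfl; exact hy.2.2 hx.2)]
    exact insert_subset (hX hx.2) (singleton_subset_iff.mpr hy.2.1)
  unfold edgeConn
  congr 1
  ext d
  constructor <;> rintro ⟨X, hXV, hne, hXne, rfl⟩ <;> exact ⟨X, hXV, hne, hXne, by rw [hcut X hXV]⟩

lemma IsUniform.induce (hG : G.IsUniform r) (A : Finset α) : (G.induce A).IsUniform r :=
  fun f hf => ⟨(mem_filter.mp hf).2, (hG f (mem_filter.mp hf).1).2⟩

lemma IsUniform.addEdge (hG : G.IsUniform r) (he : e ⊆ G.verts) (hc : e.card = r) :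
    (G.addEdge e).IsUniform r := by
  intro f hf
  rcases mem_insert.mp hf with rfl | hf
  exacts [⟨he, hc⟩, hG f hf]

lemma card_mul_card_le_card_cut (h : ∀ u ∈ Y, ∀ v ∈ G.verts \ Y, {u, v} ∈ G.edges) :
    Y.card * (G.verts \ Y).card ≤ (G.cut Y).card := by
  rw [← card_product]
  refine card_le_card_of_injOn (fun p => {p.1, p.2}) (fun p hp => ?_) (fun p hp q hq hpq => ?_)
  · simp only [coe_product, Set.mem_prod, mem_coe] at hp
    refine mem_filter.mpr ⟨h _ hp.1 _ hp.2, ⟨p.1, ?_⟩, ⟨p.2, ?_⟩⟩ <;> simp [hp.1, hp.2]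
  · simp only [coe_product, Set.mem_prod, mem_coe, mem_sdiff] at hp hq
    have hpq : ({p.1, p.2} : Finset α) = {q.1, q.2} := hpq
    have h1 : p.1 ∈ ({q.1, q.2} : Finset α) := hpq ▸ mem_insert_self _ _
    have h2 : p.2 ∈ ({q.1, q.2} : Finset α) := hpq ▸ mem_insert_of_mem (mem_singleton_self _)
    simp only [mem_insert, mem_singleton] at h1 h2
    grind

lemma card_edges_eq_add_card_cut (h : ∀ f ∈ G.edges, f.Nonempty ∧ f ⊆ G.verts) (A : Finset α) :
    G.edges.card =
      (G.induce A).edges.card + (G.induce (G.verts \ A)).edges.card + (G.cut A).card := by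
  have hA := card_filter_add_card_filter_not (s := G.edges) (· ⊆ A)
  have hB := card_filter_add_card_filter_not (s := G.edges.filter (¬ · ⊆ A)) (· ⊆ G.verts \ A)
  rw [filter_filter, filter_filter] at hB
  have hB' : G.edges.filter (fun f => ¬ f ⊆ A ∧ f ⊆ G.verts \ A) = (G.induce (G.verts \ A)).edges :=
    filter_congr fun f hf => by
      obtain ⟨x, hx⟩ := (h f hf).1
      refine ⟨And.right, fun hfB => ⟨fun hfA => ?_, hfB⟩⟩
      exact (mem_sdiff.mp (hfB hx)).2 (hfA hx)
  have hcut : G.edges.filter (fun f => ¬ f ⊆ A ∧ ¬ f ⊆ G.verts \ A) = G.cut A :=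
    filter_congr fun f hf => by
      have hfV := (h f hf).2
      simp only [not_subset, Finset.Nonempty, mem_inter, mem_sdiff]
      grind
  rw [hB', hcut] at hB
  change _ = (G.edges.filter (· ⊆ A)).card + _ + _
  omega

lemma sum_card_inter_edges_le (hG : G.IsUniform 2) (A : Finset α) :
    ∑ f ∈ G.edges, (A ∩ f).card ≤ 2 * (G.induce A).edges.card + (G.cut A).card := by
  change _ ≤ 2 * (G.edges.filter (· ⊆ A)).card + (G.edges.filter _).card
  simp only [card_filter, mul_sum, ← sum_add_distrib]
  refine sum_le_sum fun f hf => ?_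
  obtain ⟨hfV, hf2⟩ := hG f hf
  by_cases hfA : f ⊆ A
  · have := card_le_card (inter_subset_right (s₁ := A) (s₂ := f))
    simp only [hfA, if_true]
    omega
  obtain ⟨x, hxf, hxA⟩ := not_subset.mp hfA
  rcases (A ∩ f).eq_empty_or_nonempty with h0 | hne
  · simp [h0]
  have hlt : (A ∩ f).card < f.card :=
    card_lt_card <| ssubset_of_subset_of_ne inter_subset_right fun h =>
      hxA (h ▸ hxf |> mem_inter.mp).1
  have hcross : (f ∩ A).Nonempty ∧ (f ∩ (G.verts \ A)).Nonempty :=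
    ⟨inter_comm A f ▸ hne, ⟨x, mem_inter.mpr ⟨hxf, mem_sdiff.mpr ⟨hfV hxf, hxA⟩⟩⟩⟩
  simp only [hfA, hcross, and_self, if_true, if_false]
  omega

lemma IsUniform.add_two_le_card (hG : G.IsUniform 2) (hdeg : ∀ w ∈ A, k + 1 ≤ G.degree w)
    (hA : A.Nonempty) (hcut : (G.cut A).card ≤ k) : k + 2 ≤ A.card := by
  have hsum : A.card * (k + 1) ≤ 2 * (G.induce A).edges.card + (G.cut A).card :=
    (le_sum_card_inter hdeg).trans (sum_card_inter_edges_le hG A)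
  have hinduce : 2 * (G.induce A).edges.card ≤ A.card * (A.card - 1) := by
    have : (G.induce A).edges ⊆ A.powersetCard 2 := fun f hf =>
      mem_powersetCard.mpr ((hG.induce A) f hf)
    calc 2 * (G.induce A).edges.card ≤ 2 * A.card.choose 2 := by
          simpa using card_le_card this
      _ ≤ A.card * (A.card - 1) := by
          rw [Nat.choose_two_right, mul_comm]; exact Nat.div_mul_le_self _ _
  obtain ⟨a, ha⟩ : ∃ a, A.card = a + 1 := Nat.exists_eq_succ_of_ne_zero hA.card_pos.ne'
  rw [ha, Nat.add_sub_cancel] at hinduce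
  rw [ha] at hsum ⊢
  by_contra hlt
  obtain ⟨c, rfl⟩ : ∃ c, k = a + c := ⟨k - a, by omega⟩
  nlinarith

lemma IsEdgeMaximal.exists_isSub_addEdge (hG : G.IsEdgeMaximal k 2) (he : e ⊆ G.verts)
    (hc : e.card = 2) (hne : e ∉ G.edges) :
    ∃ H : FinHypergraph α, H.IsSub (G.addEdge e) ∧ e ∈ H.edges ∧ (∀ f ∈ H.edges, f ⊆ H.verts) ∧
      k + 1 ≤ H.edgeConn := by
  obtain ⟨H, hH, hconn⟩ := exists_isSub_edgeConn_eq_strength (G.addEdge e)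
  have h2 : ∀ f ∈ H.edges, f.card ≤ 2 := fun f hf => ((hG.1.addEdge he hc) f (hH.2 hf)).2.le
  have hH' : (H.induce H.verts).IsSub (G.addEdge e) := (induce_isSub subset_rfl).trans hH
  have hconn' : k + 1 ≤ (H.induce H.verts).edgeConn := by
    rw [edgeConn_induce_verts h2, hconn]
    exact hG.2.2 e he hc hne
  refine ⟨_, hH', by_contra fun heH => ?_, fun f hf => (mem_filter.mp hf).2, hconn'⟩
  have := (edgeConn_le_strength_s17 (isSub_of_isSub_addEdge hH' heH)).trans hG.2.1
  omega

lemma IsEdgeMaximal.le_card_cut (hG : G.IsEdgeMaximal k 2) (hn : k + 2 ≤ G.verts.card)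
    (hY : Y ⊂ G.verts) (hne : Y.Nonempty) : k ≤ (G.cut Y).card := by
  by_contra! hlt
  obtain ⟨u, hu, v, hv, huv⟩ : ∃ u ∈ Y, ∃ v ∈ G.verts \ Y, {u, v} ∉ G.edges := by
    by_contra! hall
    have hprod := card_mul_card_le_card_cut hall
    have hsum := card_sdiff_add_card_eq_card hY.subset
    have hB := (sdiff_nonempty.mpr (not_subset_of_ssubset hY)).card_pos
    nlinarith [hne.card_pos]
  rw [mem_sdiff] at hv
  obtain ⟨H, hH, heH, hHV, hconn⟩ := hG.exists_isSub_addEdge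
    (insert_subset (hY.subset hu) (singleton_subset_iff.mpr hv.1))
    (card_pair fun h => hv.2 (h ▸ hu)) huv
  have hv' : v ∈ H.verts := hHV _ heH (mem_insert_of_mem (mem_singleton_self v))
  have := calc
    H.edgeConn ≤ ((G.addEdge {u, v}).cut Y).card :=
      edgeConn_le_card_cut_of_isSub hH ⟨u, mem_inter.mpr ⟨hHV _ heH (mem_insert_self u _), hu⟩⟩
        fun h => hv.2 (h hv')
    _ ≤ (insert {u, v} (G.cut Y)).card := card_le_card (cut_addEdge_subset _ _ _)
    _ ≤ (G.cut Y).card + 1 := card_insert_le _ _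
  omega

lemma IsEdgeMaximal.induce (hG : G.IsEdgeMaximal k 2) (hA : A ⊂ G.verts)
    (hcut : (G.cut A).card ≤ k) : (G.induce A).IsEdgeMaximal k 2 := by
  refine ⟨hG.1.induce A, (strength_mono (induce_isSub hA.subset)).trans hG.2.1,
    fun e (he : e ⊆ A) hc hne => ?_⟩
  have heG : e ∉ G.edges := fun h => hne (mem_filter.mpr ⟨h, he⟩)
  obtain ⟨H, hH, heH, hHV, hconn⟩ := hG.exists_isSub_addEdge (he.trans hA.subset) hc heG
  by_cases hHA : H.verts ⊆ A
  · refine hconn.trans (edgeConn_le_strength_s17 ⟨hHA, fun f hf => ?_⟩)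
    rcases mem_insert.mp (hH.2 hf) with rfl | hfG
    · exact mem_insert_self _ _
    · exact mem_insert_of_mem (mem_filter.mpr ⟨hfG, (hHV f hf).trans hHA⟩)
  · obtain ⟨x, hx⟩ := card_pos.mp (hc ▸ two_pos : 0 < e.card)
    have := edgeConn_le_card_cut_of_isSub hH ⟨x, mem_inter.mpr ⟨hHV e heH hx, he hx⟩⟩ hHA
    rw [cut_addEdge_of_subset he] at this
    omega

/-- If `e₁ ≠ e₂` were both missing, a `(k + 1)`-edge-connected subgraph of `G + e₁` would need
all `k + 2` vertices, but an endpoint of `e₂` outside `e₁` has only `k` possible neighbours. -/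
lemma IsEdgeMaximal.card_powersetCard_two_sdiff_edges_le_one (hG : G.IsEdgeMaximal k 2)
    (hn : G.verts.card = k + 2) : (G.verts.powersetCard 2 \ G.edges).card ≤ 1 := by
  refine card_le_one.mpr fun e₁ he₁ e₂ he₂ => by_contra fun hne => ?_
  simp only [mem_sdiff, mem_powersetCard] at he₁ he₂
  obtain ⟨⟨he₁V, he₁2⟩, he₁G⟩ := he₁
  obtain ⟨⟨he₂V, he₂2⟩, he₂G⟩ := he₂
  obtain ⟨H, hH, -, -, hconn⟩ := hG.exists_isSub_addEdge he₁V he₁2 he₁G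
  have h2 : ∀ f ∈ H.edges, f.card ≤ 2 := fun f hf =>
    ((hG.1.addEdge he₁V he₁2) f (hH.2 hf)).2.le
  have hHV : H.verts = G.verts := eq_of_subset_of_card_le hH.1 (by
    have := edgeConn_le_card_verts_sub_one h2
    omega)
  obtain ⟨u, hu₂, hu₁⟩ := not_subset.mp fun h =>
    hne (eq_of_subset_of_card_le h (he₁2.trans he₂2.symm).le).symm
  obtain ⟨v, hv₂, hvu⟩ := exists_mem_ne (he₂2 ▸ one_lt_two) u
  have hcut : (H.cut {u}).card ≤ ((G.verts.erase u).erase v).card := by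
    refine card_cut_singleton_le h2 fun y hy hyu huy => ?_
    refine mem_erase.mpr ⟨?_, mem_erase.mpr ⟨hyu, hHV ▸ hy⟩⟩
    rintro rfl
    rcases mem_insert.mp (hH.2 huy) with h | h
    · exact hu₁ (h ▸ mem_insert_self u {y})
    · exact he₂G (eq_pair_of_card_le_two he₂2.le hu₂ hv₂ hvu.symm ▸ h)
  have hu : {u} ⊂ H.verts := singleton_ssubset_of_mem_of_one_lt_card (hHV ▸ he₂V hu₂)
    (by rw [hHV, hn]; omega)
  have := hconn.trans ((edgeConn_le_card_cut_s17 hu (singleton_nonempty u)).trans hcut)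
  rw [card_erase_of_mem (mem_erase.mpr ⟨hvu, he₂V hv₂⟩), card_erase_of_mem (he₂V hu₂)] at this
  omega

end FinHypergraph

/-- The bound `(n - 1) k - ⌊n / (k + 2)⌋ C(k, 2)`. -/
def laiBound (k n : ℕ) : ℤ := ((n : ℤ) - 1) * k - ((n / (k + 2) : ℕ) : ℤ) * (k.choose 2 : ℤ)

lemma laiBound_one (k : ℕ) : laiBound k 1 = 0 := by
  simp [laiBound, Nat.div_eq_of_lt (by omega : 1 < k + 2)]

lemma laiBound_add_le (k a b : ℕ) : laiBound k (a + b) ≤ laiBound k a + laiBound k b + k := by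
  have h : ((a / (k + 2) : ℕ) : ℤ) + ((b / (k + 2) : ℕ) : ℤ) ≤ ((a + b) / (k + 2) : ℕ) := by
    exact_mod_cast Nat.div_add_div_le_add_div
  have := mul_le_mul_of_nonneg_right h (Int.natCast_nonneg (k.choose 2))
  simp only [laiBound, Nat.cast_add]
  linarith

lemma laiBound_add_two (k : ℕ) : laiBound k (k + 2) + 1 = (k + 2).choose 2 := by
  unfold laiBound
  rw [Nat.div_self (by omega)]
  qify
  rw [Nat.cast_choose_two, Nat.cast_choose_two]
  push_cast
  ring

namespace FinHypergraph

open Finset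

variable {α : Type*} [DecidableEq α] {G : FinHypergraph α} {Y : Finset α} {k : ℕ}

lemma IsEdgeMaximal.laiBound_le_card_edges_of_card_eq (hG : G.IsEdgeMaximal k 2)
    (hn : G.verts.card = k + 2) : laiBound k G.verts.card ≤ G.edges.card := by
  have hmissing := hG.card_powersetCard_two_sdiff_edges_le_one hn
  have hpairs := card_le_card_sdiff_add_card (s := G.verts.powersetCard 2) (t := G.edges)
  rw [card_powersetCard, hn] at hpairs
  have := laiBound_add_two k
  rw [hn]
  omega

lemma IsEdgeMaximal.induce_compl (hG : G.IsEdgeMaximal k 2) (hY : Y ⊂ G.verts)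
    (hne : Y.Nonempty) (hcut : (G.cut Y).card ≤ k) :
    (G.induce (G.verts \ Y)).IsEdgeMaximal k 2 :=
  hG.induce (sdiff_ssubset hY.subset hne) ((cut_compl hY.subset).symm ▸ hcut)

lemma IsEdgeMaximal.laiBound_le_card_edges_of_card_cut_le (hG : G.IsEdgeMaximal k 2)
    (hn : k + 2 ≤ G.verts.card) (hY : Y ⊂ G.verts) (hne : Y.Nonempty)
    (hcut : (G.cut Y).card ≤ k) (hYbound : laiBound k Y.card ≤ (G.induce Y).edges.card)
    (hBbound : laiBound k (G.verts \ Y).card ≤ (G.induce (G.verts \ Y)).edges.card) :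
    laiBound k G.verts.card ≤ G.edges.card := by
  have hedges : ∀ f ∈ G.edges, f.Nonempty ∧ f ⊆ G.verts := fun f hf =>
    ⟨card_pos.mp (by rw [(hG.1 f hf).2]; omega), (hG.1 f hf).1⟩
  have hsplit := card_edges_eq_add_card_cut hedges Y
  rw [le_antisymm hcut (hG.le_card_cut hn hY hne)] at hsplit
  have hbound := laiBound_add_le k Y.card (G.verts \ Y).card
  rw [add_comm, card_sdiff_add_card_eq_card hY.subset] at hbound
  omega

theorem IsEdgeMaximal.laiBound_le_card_edges (hG : G.IsEdgeMaximal k 2)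
    (hn : k + 2 ≤ G.verts.card) : laiBound k G.verts.card ≤ G.edges.card := by
  induction hcard : G.verts.card using Nat.strong_induction_on generalizing G with
  | _ n ih =>
  subst hcard
  rcases hn.eq_or_lt with hbase | hlt
  · exact hG.laiBound_le_card_edges_of_card_eq hbase.symm
  by_cases hlow : ∃ v ∈ G.verts, G.degree v ≤ k
  · obtain ⟨v, hv, hdeg⟩ := hlow
    have hvV : {v} ⊂ G.verts := singleton_ssubset_of_mem_of_one_lt_card hv (by omega)
    have hcut : (G.cut {v}).card ≤ k := (card_cut_singleton_le_degree G v).trans hdeg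
    have hB := card_sdiff_add_card_eq_card hvV.subset
    rw [card_singleton] at hB
    refine hG.laiBound_le_card_edges_of_card_cut_le hn hvV (singleton_nonempty v) hcut
      (by simp [laiBound_one]) (ih _ (by omega) (hG.induce_compl hvV (singleton_nonempty v) hcut)
        (show k + 2 ≤ (G.verts \ {v}).card by omega) rfl)
  push Not at hlow
  obtain ⟨Y, hY, hne, hYconn⟩ := exists_card_cut_eq_edgeConn (G := G) (by omega)
  have hcut : (G.cut Y).card ≤ k := hYconn ▸ (edgeConn_le_strength_s17 (IsSub.refl G)).trans hG.2.1
  have hBne : (G.verts \ Y).Nonempty := sdiff_nonempty.mpr (not_subset_of_ssubset hY)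
  have hBcut : (G.cut (G.verts \ Y)).card ≤ k := (cut_compl hY.subset).symm ▸ hcut
  have hYlarge := hG.1.add_two_le_card (fun w hw => hlow w (hY.subset hw)) hne hcut
  have hBlarge := hG.1.add_two_le_card (fun w hw => hlow w (mem_sdiff.mp hw).1) hBne hBcut
  have hsum := card_sdiff_add_card_eq_card hY.subset
  exact hG.laiBound_le_card_edges_of_card_cut_le hn hY hne hcut
    (ih _ (by omega) (hG.induce hY hcut) hYlarge rfl)
    (ih _ (by omega) (hG.induce_compl hY hne hcut) hBlarge rfl)

end FinHypergraph

theorem lai_lower_bound_general {α : Type*} [DecidableEq α] (k n : ℕ)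
    (G : FinHypergraph α) (hG : G.IsEdgeMaximal k 2)
    (hn : G.verts.card = n) (hnk : k + 1 < n) :
    ((n : ℤ) - 1) * k - ((n / (k + 2) : ℕ) : ℤ) * (k.choose 2 : ℤ)
      ≤ (G.edges.card : ℤ) :=
  hn ▸ hG.laiBound_le_card_edges (by omega)

/-- Lai. Let `k ≥ 1` and let `G` be a `k`-edge-maximal simple graph
(a `2`-uniform hypergraph) on `n > k+1` vertices. Then
`|E(G)| ≥ (n-1)·k - ⌊n/(k+2)⌋·C(k,2)`. -/
theorem lai_lower_bound {α : Type*} [DecidableEq α] (k n : ℕ) (hk : 1 ≤ k)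
    (G : FinHypergraph α) (hG : G.IsEdgeMaximal k 2)
    (hn : G.verts.card = n) (hnk : k + 1 < n) :
    ((n : ℤ) - 1) * k - ((n / (k + 2) : ℕ) : ℤ) * (k.choose 2 : ℤ)
      ≤ (G.edges.card : ℤ) :=
  lai_lower_bound_general k n G hG hn hnk
end
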